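/- Let D be a repetitive Delone set in ℝ^d and let a0, b0 ∈ ℝ^d. Assume that every x ∈ D satisfies |⟨x − b0, a0⟩ − n| < 1/4 for some n ∈ ℤ. Then the character χ_{a0} : ℝ^d → 𝕋, x ↦ exp(2πi⟨x, a0⟩), is weakly D-equivariant. -/

import Mathlib

open Metric Set
open scoped RealInnerProductSpace

noncomputable section

/-- Euclidean space `ℝ^d`. -/
abbrev Euc (d : ℕ) := EuclideanSpace ℝ (Fin d)

variable {d : ℕ}

/-- The transl `D - x = {y - x : y ∈ D}` of a subset of `ℝ^d`. -/
def transl (D : Set (Euc d)) (x : Euc d) : Set (Euc d) := (fun y => y - x) '' D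

/-- The metric `ρ_𝕋` on `𝕋` pulled back along `θ ↦ e^{2πiθ}`:
`ρ_𝕋(e^{2πiθ}, e^{2πiθ'}) = min_{n ∈ ℤ} |θ - θ' + n|`. -/
def rhoT (θ θ' : ℝ) : ℝ := sInf { r : ℝ | ∃ n : ℤ, r = |θ - θ' + (n : ℝ)| }

/-- The character `χ_a(x) = exp(2πi⟨x,a⟩)` is weakly `D`-equivariant: for every `ε > 0`
there is `R > 0` such that `(D-x) ∩ B(0,R) = (D-y) ∩ B(0,R)` implies
`ρ_𝕋(χ_a x, χ_a y) < ε`. -/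
def WeaklyEquivariant (D : Set (Euc d)) (a : Euc d) : Prop :=
  ∀ ε > 0, ∃ R > 0, ∀ x y : Euc d,
    transl D x ∩ closedBall 0 R = transl D y ∩ closedBall 0 R →
    rhoT (⟪x, a⟫) (⟪y, a⟫) < ε

/-- The stripe `S(a,b,L1,L2) = {x : ⟨x-b,a⟩ ∈ L1·ℤ + [-L2,L2]}`. -/
def stripeSet (a b : Euc d) (L1 L2 : ℝ) : Set (Euc d) :=
  { x | ∃ n : ℤ, ∃ t ∈ Icc (-L2) L2, (⟪x - b, a⟫) = L1 * n + t }

/-- `D` has `(L1,L2)`-stripe structure with direction `a` and radius `R`. -/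
def StripeStructureWith (D : Set (Euc d)) (a : Euc d) (L1 L2 R : ℝ) : Prop :=
  ∀ x : Euc d,
    { y : Euc d | transl D x ∩ closedBall 0 R = transl D y ∩ closedBall 0 R }
      ⊆ stripeSet a x L1 L2

/-- `D` has `(L1,L2)`-stripe structure. -/
def HasStripeStructure (D : Set (Euc d)) (L1 L2 : ℝ) : Prop :=
  ∃ a : Euc d, ‖a‖ = 1 ∧ ∃ R > 0, StripeStructureWith D a L1 L2 R

/-- `D` is `r`-uniformly discrete. -/
def UnifDiscrete (D : Set (Euc d)) (r : ℝ) : Prop :=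
  ∀ x ∈ D, ∀ y ∈ D, x ≠ y → r < dist x y

/-- `D` is `R`-relatively dense. -/
def RelDense (D : Set (Euc d)) (R : ℝ) : Prop :=
  ∀ x : Euc d, ∃ y ∈ D, dist x y < R

/-- `D` is an `(R,r)`-Delone set. -/
def IsDeloneWith (D : Set (Euc d)) (R r : ℝ) : Prop :=
  0 < R ∧ 0 < r ∧ RelDense D R ∧ UnifDiscrete D r

/-- `D` is a Delone set. -/
def IsDelone (D : Set (Euc d)) : Prop := ∃ R r : ℝ, IsDeloneWith D R r

/-- `D` has finite local complexity: for every compact `K`, the family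
`{(D-x) ∩ K : x ∈ ℝ^d}` is finite modulo translation. -/
def FLC (D : Set (Euc d)) : Prop :=
  ∀ K : Set (Euc d), IsCompact K →
    ∃ F : Set (Set (Euc d)), F.Finite ∧
      ∀ x : Euc d, ∃ P ∈ F, ∃ t : Euc d, transl D x ∩ K = transl P t

/-- `D` is repetitive. -/
def Repetitive (D : Set (Euc d)) : Prop :=
  ∀ K : Set (Euc d), IsCompact K →
    ∃ R > 0, RelDense { x : Euc d | transl D x ∩ K = D ∩ K } R

/-- `D2` is locally derivable from `D1` (`D1 ⟶ D2`). -/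
def LocDerivable (D1 D2 : Set (Euc d)) : Prop :=
  ∃ R0 ≥ (0 : ℝ), ∀ x y : Euc d, ∀ L ≥ (0 : ℝ),
    transl D1 x ∩ closedBall 0 (L + R0) = transl D1 y ∩ closedBall 0 (L + R0) →
    transl D2 x ∩ closedBall 0 L = transl D2 y ∩ closedBall 0 L

/-! Let `φ(p) ∈ (-1/4, 1/4)` be the signed distance from `⟪p - b0, a0⟫` to `ℤ`. For `p, q ∈ D` the
difference `φ p - φ q` lies in `(-1/2, 1/2)` and is `⟪p - q, a0⟫` modulo `ℤ`, so it depends only on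
`p - q`. Choose `p, p' ∈ D` whose phase spread `φ p - φ p'` is within `ε` of `sup φ - inf φ`; then
`φ (p + w)` is within `ε` of `sup φ` whenever `p + w, p' + w ∈ D`. If the large patches of `D` around
`x` and `y` agree, repetitivity gives such a `w` for which `w + (y - x)` works too, and the two nearly
maximal phases `φ (p + w)`, `φ (p + w + (y - x))` differ by `⟪y - x, a0⟫` modulo `ℤ`. -/

def phase (a b p : Euc d) : ℝ := ⟪p - b, a⟫ - round (⟪p - b, a⟫ : ℝ)

lemma mem_transl {D : Set (Euc d)} {x q : Euc d} : q ∈ transl D x ↔ q + x ∈ D := by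
  simp [transl, sub_eq_iff_eq_add]

lemma RelDense.nonempty {D : Set (Euc d)} {R : ℝ} (h : RelDense D R) : D.Nonempty :=
  let ⟨p, hp, _⟩ := h 0
  ⟨p, hp⟩

lemma rhoT_le_abs_sub_add_int (θ θ' : ℝ) (n : ℤ) : rhoT θ θ' ≤ |θ - θ' + n| :=
  csInf_le ⟨0, by rintro r ⟨m, rfl⟩; exact abs_nonneg _⟩ ⟨n, rfl⟩

lemma exists_int_phase_sub_phase (a b p q : Euc d) :
    ∃ m : ℤ, phase a b p - phase a b q = ⟪p - q, a⟫ + m :=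
  ⟨round (⟪q - b, a⟫ : ℝ) - round (⟪p - b, a⟫ : ℝ), by
    simp only [phase, inner_sub_left]; push_cast; ring⟩

lemma abs_phase_lt_of_abs_sub_int_lt {a b p : Euc d} {n : ℤ} {c : ℝ}
    (h : |⟪p - b, a⟫ - n| < c) : |phase a b p| < c :=
  (round_le _ n).trans_lt h

lemma rhoT_inner_le_abs_phase_sub (a b : Euc d) {x y q q' : Euc d} (h : q' - q = y - x) :
    rhoT ⟪x, a⟫ ⟪y, a⟫ ≤ |phase a b q' - phase a b q| := by
  obtain ⟨m, hm⟩ := exists_int_phase_sub_phase a b q' q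
  calc rhoT ⟪x, a⟫ ⟪y, a⟫ ≤ |⟪x, a⟫ - ⟪y, a⟫ + ((-m : ℤ) : ℝ)| :=
        rhoT_le_abs_sub_add_int _ _ _
    _ = |phase a b q' - phase a b q| := by
      rw [hm, h, inner_sub_left, ← abs_neg]; push_cast; ring_nf

lemma phase_sub_phase_eq_of_sub_eq {a b : Euc d} {D : Set (Euc d)}
    (hD : ∀ p ∈ D, |phase a b p| < 1 / 4) {p q p' q' : Euc d} (hp : p ∈ D) (hq : q ∈ D)
    (hp' : p' ∈ D) (hq' : q' ∈ D) (h : p - q = p' - q') :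
    phase a b p - phase a b q = phase a b p' - phase a b q' := by
  obtain ⟨m, hm⟩ := exists_int_phase_sub_phase a b p q
  obtain ⟨m', hm'⟩ := exists_int_phase_sub_phase a b p' q'
  have hdiff : (phase a b p - phase a b q) - (phase a b p' - phase a b q') =
      ((m - m' : ℤ) : ℝ) := by
    rw [hm, hm', h]; push_cast; ring
  have habs : |((m - m' : ℤ) : ℝ)| < 1 := by
    obtain ⟨h1, h2⟩ := abs_lt.1 (hD p hp)
    obtain ⟨h3, h4⟩ := abs_lt.1 (hD q hq)
    obtain ⟨h5, h6⟩ := abs_lt.1 (hD p' hp')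
    obtain ⟨h7, h8⟩ := abs_lt.1 (hD q' hq')
    rw [← hdiff, abs_lt]
    constructor <;> linarith
  have hm0 : m - m' = 0 := Int.abs_lt_one_iff.1 (by exact_mod_cast habs)
  rwa [hm0, Int.cast_zero, sub_eq_zero] at hdiff

lemma exists_pair_abs_phase_translate_sub_lt {a b : Euc d} {D : Set (Euc d)} (hne : D.Nonempty)
    (hD : ∀ p ∈ D, |phase a b p| < 1 / 4) {ε : ℝ} (hε : 0 < ε) :
    ∃ p ∈ D, ∃ p' ∈ D, ∀ w w' : Euc d, p + w ∈ D → p' + w ∈ D → p + w' ∈ D → p' + w' ∈ D →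
      |phase a b (p + w') - phase a b (p + w)| < ε := by
  set T := phase a b '' D
  have hT : T ⊆ Icc (-(1 / 4)) (1 / 4) := by
    rintro _ ⟨p, hp, rfl⟩
    exact abs_le.1 (hD p hp).le
  have hTa : BddAbove T := bddAbove_Icc.mono hT
  have hTb : BddBelow T := bddBelow_Icc.mono hT
  obtain ⟨_, ⟨p, hp, rfl⟩, hpmax⟩ :=
    exists_lt_of_lt_csSup (hne.image _) (sub_lt_self (sSup T) (half_pos hε))
  obtain ⟨_, ⟨p', hp', rfl⟩, hp'min⟩ :=
    exists_lt_of_csInf_lt (hne.image _) (lt_add_of_pos_right (sInf T) (half_pos hε))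
  have hnear : ∀ w, p + w ∈ D → p' + w ∈ D →
      sSup T - ε < phase a b (p + w) ∧ phase a b (p + w) ≤ sSup T := by
    intro w hpw hp'w
    have hspread := phase_sub_phase_eq_of_sub_eq hD hpw hp'w hp hp' (by abel)
    have hmin := csInf_le hTb (mem_image_of_mem _ hp'w)
    exact ⟨by linarith, le_csSup hTa (mem_image_of_mem _ hpw)⟩
  refine ⟨p, hp, p', hp', fun w w' hpw hp'w hpw' hp'w' => ?_⟩
  obtain ⟨h1, h2⟩ := hnear w hpw hp'w
  obtain ⟨h3, h4⟩ := hnear w' hpw' hp'w'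
  rw [abs_lt]
  constructor <;> linarith

lemma Repetitive.exists_translate_of_patch_eq {D : Set (Euc d)} (hrep : Repetitive D)
    {R₁ : ℝ} (hR₁ : 0 ≤ R₁) :
    ∃ R > 0, ∀ x y : Euc d, transl D x ∩ closedBall 0 R = transl D y ∩ closedBall 0 R →
      ∃ z : Euc d, ∀ p ∈ D, ‖p‖ ≤ R₁ → p + z ∈ D ∧ p + (z + (y - x)) ∈ D := by
  obtain ⟨M, hM, hdense⟩ := hrep (closedBall 0 R₁) (isCompact_closedBall 0 R₁)
  refine ⟨R₁ + M, by linarith, fun x y hxy => ?_⟩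
  obtain ⟨z, hz, hxz⟩ := hdense x
  refine ⟨z, fun p hp hpR => ?_⟩
  have hpz : p + z ∈ D := by
    have : p ∈ transl D z ∩ closedBall 0 R₁ := hz ▸ ⟨hp, mem_closedBall_zero_iff.2 hpR⟩
    exact mem_transl.1 this.1
  have hnorm : ‖p + z - x‖ ≤ R₁ + M := by
    calc ‖p + z - x‖ = ‖p + (z - x)‖ := by rw [add_sub_assoc]
      _ ≤ ‖p‖ + dist z x := (norm_add_le _ _).trans_eq (by rw [dist_eq_norm])
      _ ≤ R₁ + M := by rw [dist_comm] at hxz; linarith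
  have hmem : p + z - x ∈ transl D y ∩ closedBall 0 (R₁ + M) := by
    rw [← hxy]
    exact ⟨mem_transl.2 (by rwa [sub_add_cancel]), mem_closedBall_zero_iff.2 hnorm⟩
  refine ⟨hpz, ?_⟩
  convert mem_transl.1 hmem.1 using 1
  abel

/-- let `D` be a repetitive Delone set such that every `x ∈ D` satisfies
`|⟨x - b0, a0⟩ - n| < 1/4` for some `n ∈ ℤ`. Then the character
`χ_{a0} : x ↦ exp(2πi⟨x, a0⟩)` is weakly `D`-equivariant. -/
theorem stmt7 (d : ℕ) (D : Set (Euc d)) (a0 b0 : Euc d)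
    (hDel : IsDelone D) (hrep : Repetitive D)
    (hband : ∀ x ∈ D, ∃ n : ℤ, |(⟪x - b0, a0⟫) - (n : ℝ)| < 1 / 4) :
    WeaklyEquivariant D a0 := by
  obtain ⟨_, _, -, -, hdense, -⟩ := hDel
  have hphase : ∀ p ∈ D, |phase a0 b0 p| < 1 / 4 := fun p hp =>
    let ⟨_, hn⟩ := hband p hp
    abs_phase_lt_of_abs_sub_int_lt hn
  intro ε hε
  obtain ⟨p, hp, p', hp', hpinned⟩ :=
    exists_pair_abs_phase_translate_sub_lt hdense.nonempty hphase hε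
  obtain ⟨R, hR, htranslate⟩ :=
    hrep.exists_translate_of_patch_eq ((norm_nonneg p).trans (le_max_left _ ‖p'‖))
  refine ⟨R, hR, fun x y hxy => ?_⟩
  obtain ⟨z, hz⟩ := htranslate x y hxy
  obtain ⟨hpz, hpzyx⟩ := hz p hp (le_max_left _ _)
  obtain ⟨hp'z, hp'zyx⟩ := hz p' hp' (le_max_right _ _)
  calc rhoT ⟪x, a0⟫ ⟪y, a0⟫ ≤ |phase a0 b0 (p + (z + (y - x))) - phase a0 b0 (p + z)| :=
        rhoT_inner_le_abs_phase_sub a0 b0 (by abel)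
    _ < ε := hpinned _ _ hpz hp'z hpzyx hp'zyx
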